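/- arXiv:1902.02017 — 3 statements merged into one kernel-verified Lean document; each statement's English description precedes it below -/
import Mathlib

section
/- For u ∈ H¹(ℝ,ℂ²) and δ > 0, the Riemann sum of ‖u‖² over the lattice δℤ satisfies δ Σ_{x ∈ δℤ} ‖u(x)‖²_{ℂ²} ≤ ‖u‖²_{L²} + 2δ ‖u‖_{L²} ‖∂_x u‖_{L²}. -/
open MeasureTheory Real

noncomputable section

abbrev C2 := EuclideanSpace ℂ (Fin 2)

/-- The `L²` norm `‖u‖_{L²} = (∫ ‖u(x)‖² dx)^{1/2}`. -/
def L2Norm (u : ℝ → C2) : ℝ := Real.sqrt (∫ x : ℝ, ‖u x‖ ^ 2)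

open Set

/-!
On each cell `(a, a + δ]` of the lattice, the fundamental theorem of calculus gives
`F a ≤ F x + ∫_{(a, a+δ]} |F'|` for `F = ‖u‖²`; averaging over the cell and summing over all cells
bounds `δ ∑ F(δn)` by `∫ F + δ ∫ |F'|`. Finally `|F'| = 2 |Re⟪u, u'⟫| ≤ 2 ‖u‖ ‖u'‖`, and
Cauchy–Schwarz bounds `∫ ‖u‖ ‖u'‖` by `‖u‖_{L²} ‖u'‖_{L²}`.
-/

theorem integral_norm_mul_norm_le_sqrt_mul_sqrt {α E F : Type*} [MeasurableSpace α]
    {μ : Measure α} [NormedAddCommGroup E] [NormedAddCommGroup F] {f : α → E} {g : α → F}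
    (hf : MemLp f 2 μ) (hg : MemLp g 2 μ) :
    ∫ a, ‖f a‖ * ‖g a‖ ∂μ ≤ √(∫ a, ‖f a‖ ^ 2 ∂μ) * √(∫ a, ‖g a‖ ^ 2 ∂μ) := by
  have h_two : ENNReal.ofReal 2 = 2 := by norm_num
  have := integral_mul_le_Lp_mul_Lq_of_nonneg Real.HolderConjugate.two_two
    (.of_forall fun a => norm_nonneg (f a)) (.of_forall fun a => norm_nonneg (g a))
    (h_two ▸ hf.norm) (h_two ▸ hg.norm)
  simpa only [Real.rpow_two, Real.sqrt_eq_rpow, one_div] using this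

theorem le_add_integral_abs_deriv {F F' : ℝ → ℝ} {a b x : ℝ}
    (hF : ∀ t ∈ Icc a b, HasDerivAt F (F' t) t) (hF' : IntegrableOn F' (Ioc a b))
    (hx : x ∈ Icc a b) :
    F a ≤ F x + ∫ t in Ioc a b, |F' t| := by
  have hsub : Ioc a x ⊆ Ioc a b := Ioc_subset_Ioc_right hx.2
  have ftc : ∫ t in a..x, F' t = F x - F a :=
    intervalIntegral.integral_eq_sub_of_hasDerivAt
      (fun t ht => hF t (Icc_subset_Icc_right hx.2 (uIcc_of_le hx.1 ▸ ht)))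
      ((intervalIntegrable_iff_integrableOn_Ioc_of_le hx.1).2 (hF'.mono_set hsub))
  calc F a = F x - ∫ t in a..x, F' t := by rw [ftc]; ring
    _ ≤ F x + |∫ t in a..x, F' t| := by linarith [neg_abs_le (∫ t in a..x, F' t)]
    _ ≤ F x + ∫ t in a..x, |F' t| := by
      gcongr; exact intervalIntegral.abs_integral_le_integral_abs hx.1
    _ = F x + ∫ t in Ioc a x, |F' t| := by rw [intervalIntegral.integral_of_le hx.1]
    _ ≤ F x + ∫ t in Ioc a b, |F' t| := by
      gcongr F x + ?_
      exact setIntegral_mono_set hF'.abs (.of_forall fun t => abs_nonneg _) hsub.eventuallyLE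

theorem mul_le_setIntegral_add_mul_integral_abs_deriv {F F' : ℝ → ℝ} {a b : ℝ} (hab : a ≤ b)
    (hF : ∀ t ∈ Icc a b, HasDerivAt F (F' t) t) (hFi : IntegrableOn F (Ioc a b))
    (hF' : IntegrableOn F' (Ioc a b)) :
    (b - a) * F a ≤ (∫ t in Ioc a b, F t) + (b - a) * ∫ t in Ioc a b, |F' t| := by
  set C := ∫ t in Ioc a b, |F' t|
  have hconst : IntegrableOn (fun _ => C) (Ioc a b) := integrableOn_const measure_Ioc_lt_top.ne
  have hvol : volume.real (Ioc a b) = b - a := Real.volume_real_Ioc_of_le hab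
  calc (b - a) * F a = ∫ _ in Ioc a b, F a := by simp [hvol]
    _ ≤ ∫ t in Ioc a b, (F t + C) :=
      setIntegral_mono_on (integrableOn_const measure_Ioc_lt_top.ne) (hFi.add hconst)
        measurableSet_Ioc fun x hx => le_add_integral_abs_deriv hF hF' (Ioc_subset_Icc_self hx)
    _ = (∫ t in Ioc a b, F t) + (b - a) * C := by
      rw [integral_add hFi hconst]; simp [hvol]

theorem hasSum_setIntegral_Ioc_mul_int {E : Type*} [NormedAddCommGroup E] [NormedSpace ℝ E]
    {f : ℝ → E} {δ : ℝ} (hδ : 0 < δ) (hf : Integrable f) :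
    HasSum (fun n : ℤ => ∫ x in Ioc (δ * n) (δ * n + δ), f x) (∫ x, f x) := by
  have hcells : (fun n : ℤ => Ioc (δ * n) (δ * n + δ)) =
      fun n : ℤ => Ioc (0 + n • δ) (0 + (n + 1) • δ) := by
    ext n : 1; simp only [zero_add, zsmul_eq_mul, Int.cast_add, Int.cast_one]; ring_nf
  have := hasSum_integral_iUnion (μ := volume) (f := f) (fun n : ℤ => measurableSet_Ioc)
    (hcells ▸ pairwise_disjoint_Ioc_add_zsmul 0 δ)
    (by rw [hcells, iUnion_Ioc_add_zsmul hδ]; exact hf.integrableOn)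
  rwa [hcells, iUnion_Ioc_add_zsmul hδ, Measure.restrict_univ] at this

theorem mul_tsum_le_integral_add_mul_integral_abs_deriv {F F' : ℝ → ℝ} {δ : ℝ} (hδ : 0 < δ)
    (hF0 : ∀ t, 0 ≤ F t) (hF : ∀ t, HasDerivAt F (F' t) t) (hFi : Integrable F)
    (hF'i : Integrable F') :
    δ * ∑' n : ℤ, F (δ * n) ≤ (∫ t, F t) + δ * ∫ t, |F' t| := by
  have hcell : ∀ n : ℤ, δ * F (δ * n) ≤
      (∫ t in Ioc (δ * n) (δ * n + δ), F t) + δ * ∫ t in Ioc (δ * n) (δ * n + δ), |F' t| := by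
    intro n
    simpa using mul_le_setIntegral_add_mul_integral_abs_deriv (a := δ * n) (b := δ * n + δ)
      (by linarith) (fun t _ => hF t) hFi.integrableOn hF'i.integrableOn
  have hsum := (hasSum_setIntegral_Ioc_mul_int hδ hFi).add
    ((hasSum_setIntegral_Ioc_mul_int hδ hF'i.abs).mul_left δ)
  have hsummable : Summable fun n : ℤ => δ * F (δ * n) :=
    hsum.summable.of_nonneg_of_le (fun n => mul_nonneg hδ.le (hF0 _)) hcell
  rw [← tsum_mul_left]
  exact hasSum_le hcell hsummable.hasSum hsum

/-- For `u ∈ H¹(ℝ,ℂ²)` and `δ > 0`, the Riemann sum over the lattice `δℤ` satisfies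
`δ ∑_{x ∈ δℤ} ‖u(x)‖² ≤ ‖u‖²_{L²} + 2δ ‖u‖_{L²} ‖∂_x u‖_{L²}`. -/
theorem latticeSum_le (δ : ℝ) (hδ : 0 < δ) (u : ℝ → C2)
    (hu : ContDiff ℝ 1 u)
    (huL2 : Integrable (fun x => ‖u x‖ ^ 2))
    (hu'L2 : Integrable (fun x => ‖deriv u x‖ ^ 2)) :
    δ * ∑' n : ℤ, ‖u (δ * n)‖ ^ 2 ≤
      (∫ x : ℝ, ‖u x‖ ^ 2) + 2 * δ * L2Norm u * L2Norm (deriv u) := by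
  have hu' : Continuous (deriv u) := hu.continuous_deriv le_rfl
  have hderiv : ∀ t, HasDerivAt (‖u ·‖ ^ 2) (2 * inner ℝ (u t) (deriv u t)) t :=
    fun t => (hu.differentiable one_ne_zero t).hasDerivAt.norm_sq
  have hbound : ∀ t, |2 * inner ℝ (u t) (deriv u t)| ≤ 2 * (‖u t‖ * ‖deriv u t‖) := fun t => by
    rw [abs_mul, abs_two]; gcongr; exact abs_real_inner_le_norm _ _
  have hmem : MemLp u 2 :=
    (memLp_two_iff_integrable_sq_norm hu.continuous.aestronglyMeasurable).2 huL2
  have hmem' : MemLp (deriv u) 2 :=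
    (memLp_two_iff_integrable_sq_norm hu'.aestronglyMeasurable).2 hu'L2
  have hprod : Integrable fun t => 2 * (‖u t‖ * ‖deriv u t‖) :=
    (hmem.norm.integrable_mul hmem'.norm).const_mul 2
  have hderiv_int : Integrable fun t => 2 * inner ℝ (u t) (deriv u t) :=
    hprod.mono' (continuous_const.mul (hu.continuous.inner hu')).aestronglyMeasurable
      (.of_forall fun t => (Real.norm_eq_abs _).trans_le (hbound t))
  have hCS : ∫ t, |2 * inner ℝ (u t) (deriv u t)| ≤ 2 * (L2Norm u * L2Norm (deriv u)) := calc
    _ ≤ ∫ t, 2 * (‖u t‖ * ‖deriv u t‖) := integral_mono hderiv_int.abs hprod hbound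
    _ = 2 * ∫ t, ‖u t‖ * ‖deriv u t‖ := integral_const_mul 2 _
    _ ≤ 2 * (L2Norm u * L2Norm (deriv u)) := by
      gcongr; exact integral_norm_mul_norm_le_sqrt_mul_sqrt hmem hmem'
  calc δ * ∑' n : ℤ, ‖u (δ * n)‖ ^ 2
      ≤ (∫ t, ‖u t‖ ^ 2) + δ * ∫ t, |2 * inner ℝ (u t) (deriv u t)| :=
        mul_tsum_le_integral_add_mul_integral_abs_deriv hδ (fun _ => by positivity) hderiv huL2
          hderiv_int
    _ ≤ (∫ t, ‖u t‖ ^ 2) + δ * (2 * (L2Norm u * L2Norm (deriv u))) := by gcongr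
    _ = (∫ x : ℝ, ‖u x‖ ^ 2) + 2 * δ * L2Norm u * L2Norm (deriv u) := by ring
end
end

section
/- For u ∈ H^{s+1}(ℝ,ℂ²), 0 ≤ j ≤ s, and δ > 0, the iterated difference quotient D_δ^j u := (δ⁻¹(e^{δ∂_x}−1))^j u satisfies δ Σ_{x ∈ δℤ} ‖D_δ^j u(x)‖²_{ℂ²} ≤ ‖∂_x^j u‖²_{L²} + 2δ ‖∂_x^j u‖_{L²} ‖∂_x^{j+1} u‖_{L²}. -/
open MeasureTheory Real

noncomputable section

/-- Membership in the Sobolev space `H^s(ℝ, ℂ²)`. -/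
def InH (s : ℕ) (u : ℝ → C2) : Prop :=
  ContDiff ℝ s u ∧ ∀ j ≤ s, Integrable (fun x => ‖iteratedDeriv j u x‖ ^ 2)

/-- Forward difference quotient `D_δ u = δ⁻¹ (u(·+δ) - u)`. -/
def Dquot (δ : ℝ) (u : ℝ → C2) : ℝ → C2 := fun x => δ⁻¹ • (u (x + δ) - u x)

/-!
For `v ∈ C¹`, the slope `δ⁻¹ (v (x + δ) - v x)` is the average of `v'` over `(x, x + δ]`, so by
Jensen and Fubini `‖D_δ v‖_{L²} ≤ ‖v'‖_{L²}`; as `D_δ` commutes with `∂_x`, iterating gives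
`‖D_δ^j u‖_{L²} ≤ ‖∂_x^j u‖_{L²}` and `‖∂_x D_δ^j u‖_{L²} ≤ ‖∂_x^{j+1} u‖_{L²}`.

On a cell `[δn, δ(n+1)]`, `f (δn) ≤ f x + ∫_cell |f'|`; averaging over the cell and summing over
`n` gives `δ ∑ f (δn) ≤ ∫ f + δ ∫ |f'|`. For `f = ‖v‖²` we have `|f'| ≤ 2 ‖v‖ ‖v'‖`, and
Cauchy–Schwarz turns this into the claim for `v = D_δ^j u`.
-/

open Set

theorem integral_mul_le_sqrt_integral_sq_mul_sqrt {α : Type*} [MeasurableSpace α]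
    {μ : Measure α} {f g : α → ℝ} (hf0 : 0 ≤ f) (hg0 : 0 ≤ g) (hf : MemLp f 2 μ)
    (hg : MemLp g 2 μ) :
    ∫ x, f x * g x ∂μ ≤ √(∫ x, f x ^ 2 ∂μ) * √(∫ x, g x ^ 2 ∂μ) := by
  have h := integral_mul_le_Lp_mul_Lq_of_nonneg Real.HolderConjugate.two_two
    (ae_of_all _ hf0) (ae_of_all _ hg0) (by simpa using hf) (by simpa using hg)
  simpa only [sqrt_eq_rpow, ← rpow_natCast, one_div, Nat.cast_ofNat] using h

section Averaging

variable {E : Type*} [NormedAddCommGroup E] {h : ℝ → E} {S : Set ℝ}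

theorem integrable_comp_add_prod (hh : Integrable h) (hS : volume S ≠ ⊤) :
    Integrable (Function.uncurry fun x s => h (x + s)) (volume.prod (volume.restrict S)) := by
  have hmeas : AEStronglyMeasurable (Function.uncurry fun x s => h (x + s))
      (volume.prod (volume.restrict S)) := by
    have hadd : (fun p : ℝ × ℝ => p.2 + p.1) = fun p => p.1 + p.2 :=
      funext fun p => add_comm _ _
    have := quasiMeasurePreserving_add_swap volume (volume.restrict S)
    rw [hadd] at this
    exact hh.aestronglyMeasurable.comp_quasiMeasurePreserving this
  refine (integrable_prod_iff' hmeas).2 ⟨ae_of_all _ fun s => hh.comp_add_right s, ?_⟩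
  simp_rw [Function.uncurry_apply_pair, integral_add_right_eq_self (fun x => ‖h x‖)]
  exact integrableOn_const hS

theorem integrable_setIntegral_comp_add [NormedSpace ℝ E] (hh : Integrable h)
    (hS : volume S ≠ ⊤) : Integrable fun x => ∫ s in S, h (x + s) :=
  (integrable_comp_add_prod hh hS).integral_prod_left

theorem integral_setIntegral_comp_add [NormedSpace ℝ E] [CompleteSpace E] (hh : Integrable h)
    (hS : volume S ≠ ⊤) :
    ∫ x, ∫ s in S, h (x + s) = volume.real S • ∫ x, h x := by
  rw [integral_integral_swap (integrable_comp_add_prod hh hS)]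
  simp_rw [integral_add_right_eq_self h, setIntegral_const]

end Averaging

section Slope

variable {E : Type*} [NormedAddCommGroup E] [NormedSpace ℝ E] [CompleteSpace E] {v : ℝ → E}
  {δ : ℝ}

theorem norm_sq_slope_le_setIntegral (hv : ContDiff ℝ 1 v) (hδ : 0 < δ) (x : ℝ) :
    ‖δ⁻¹ • (v (x + δ) - v x)‖ ^ 2 ≤ δ⁻¹ * ∫ s in Ioc 0 δ, ‖deriv v (x + s)‖ ^ 2 := by
  have hv' : Continuous (deriv v) := hv.continuous_deriv le_rfl
  have hvol : volume (Ioc x (x + δ)) = ENNReal.ofReal δ := by simp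
  have hslope : δ⁻¹ • (v (x + δ) - v x) = ⨍ t in Ioc x (x + δ), deriv v t := by
    rw [setAverage_eq, measureReal_def, hvol, ENNReal.toReal_ofReal hδ.le,
      ← intervalIntegral.integral_of_le (by linarith),
      intervalIntegral.integral_deriv_eq_sub (fun t _ => hv.differentiable one_ne_zero t)
        (hv'.intervalIntegrable _ _)]
  have hjensen := (convexOn_univ_norm.pow (fun _ _ => norm_nonneg _) 2).map_set_average_le
    (μ := volume) (t := Ioc x (x + δ)) (continuous_norm.pow 2).continuousOn isClosed_univ
    (by simp [hδ]) (by simp) (ae_of_all _ fun _ => mem_univ _) hv'.integrableOn_Ioc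
    (hv'.norm.pow 2).integrableOn_Ioc
  rw [hslope]
  refine hjensen.trans_eq ?_
  rw [setAverage_eq, measureReal_def, hvol, ENNReal.toReal_ofReal hδ.le, smul_eq_mul,
    ← intervalIntegral.integral_of_le (by linarith), ← intervalIntegral.integral_of_le hδ.le,
    intervalIntegral.integral_comp_add_left (fun t => ‖deriv v t‖ ^ 2), add_zero]
  rfl

theorem integrable_norm_sq_slope (hv : ContDiff ℝ 1 v) (hδ : 0 < δ)
    (hv' : Integrable fun x => ‖deriv v x‖ ^ 2) :
    Integrable fun x => ‖δ⁻¹ • (v (x + δ) - v x)‖ ^ 2 := by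
  have hbound := integrable_setIntegral_comp_add (S := Ioc 0 δ) hv' measure_Ioc_lt_top.ne
  refine (hbound.const_mul δ⁻¹).mono' ?_ (ae_of_all _ fun x => ?_)
  · have hc := hv.continuous
    exact (((hc.comp (continuous_add_const δ)).sub hc).const_smul δ⁻¹).norm.pow 2
      |>.aestronglyMeasurable
  · rw [norm_pow, norm_norm]
    exact norm_sq_slope_le_setIntegral hv hδ x

theorem integral_norm_sq_slope_le (hv : ContDiff ℝ 1 v) (hδ : 0 < δ)
    (hv' : Integrable fun x => ‖deriv v x‖ ^ 2) :
    ∫ x, ‖δ⁻¹ • (v (x + δ) - v x)‖ ^ 2 ≤ ∫ x, ‖deriv v x‖ ^ 2 := by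
  have hbound := integrable_setIntegral_comp_add (S := Ioc 0 δ) hv' measure_Ioc_lt_top.ne
  calc ∫ x, ‖δ⁻¹ • (v (x + δ) - v x)‖ ^ 2
      ≤ ∫ x, δ⁻¹ * ∫ s in Ioc 0 δ, ‖deriv v (x + s)‖ ^ 2 :=
        integral_mono (integrable_norm_sq_slope hv hδ hv') (hbound.const_mul δ⁻¹)
          (norm_sq_slope_le_setIntegral hv hδ)
    _ = ∫ x, ‖deriv v x‖ ^ 2 := by
        rw [integral_const_mul, integral_setIntegral_comp_add hv' measure_Ioc_lt_top.ne,
          Real.volume_real_Ioc_of_le hδ.le, sub_zero, smul_eq_mul, inv_mul_cancel_left₀ hδ.ne']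

end Slope

section Sampling

open scoped RealInnerProductSpace

theorem MeasureTheory.Integrable.hasSum_intervalIntegral_mul_intCast {E : Type*}
    [NormedAddCommGroup E] [NormedSpace ℝ E] {f : ℝ → E} (hf : Integrable f) {δ : ℝ}
    (hδ : 0 < δ) : HasSum (fun n : ℤ => ∫ x in δ * n..δ * (n + 1), f x) (∫ x, f x) := by
  have hcell : ∀ n : ℤ, Ioc (δ * n) (δ * (n + 1)) = Ioc (0 + n • δ) (0 + (n + 1) • δ) := by
    simp [zsmul_eq_mul, mul_comm]
  simp_rw [intervalIntegral.integral_of_le (mul_le_mul_of_nonneg_left (le_add_of_nonneg_right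
    zero_le_one) hδ.le), hcell]
  rw [← setIntegral_univ, ← iUnion_Ioc_add_zsmul hδ 0]
  exact hasSum_integral_iUnion (fun _ => measurableSet_Ioc) (pairwise_disjoint_Ioc_add_zsmul 0 δ)
    hf.integrableOn

theorem sub_mul_le_intervalIntegral_add_mul_intervalIntegral_abs {f f' : ℝ → ℝ} {a b : ℝ}
    (hab : a ≤ b) (hf : ∀ x ∈ Icc a b, HasDerivAt f (f' x) x)
    (hf' : IntervalIntegrable f' volume a b) :
    (b - a) * f a ≤ (∫ x in a..b, f x) + (b - a) * ∫ x in a..b, |f' x| := by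
  have hpoint : ∀ x ∈ Icc a b, f a ≤ f x + ∫ t in a..b, |f' t| := by
    intro x hx
    have hsub : uIcc a x ⊆ uIcc a b := uIcc_subset_uIcc_left (Icc_subset_uIcc hx)
    have hftc : ∫ t in a..x, f' t = f x - f a :=
      intervalIntegral.integral_eq_sub_of_hasDerivAt
        (fun t ht => hf t (by rw [uIcc_of_le hx.1] at ht; exact ⟨ht.1, ht.2.trans hx.2⟩))
        (hf'.mono_set hsub)
    have hvar : -(∫ t in a..x, f' t) ≤ ∫ t in a..b, |f' t| :=
      (neg_le_abs _).trans <| (intervalIntegral.abs_integral_le_integral_abs hx.1).trans <|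
        intervalIntegral.integral_mono_interval le_rfl hx.1 hx.2
          (ae_of_all _ fun _ => abs_nonneg _) hf'.abs
    linarith
  have hfc : IntervalIntegrable f volume a b :=
    (ContinuousOn.intervalIntegrable_of_Icc hab fun x hx =>
      (hf x hx).continuousAt.continuousWithinAt)
  calc (b - a) * f a = ∫ _ in a..b, f a := by simp
    _ ≤ ∫ x in a..b, (f x + ∫ t in a..b, |f' t|) :=
        intervalIntegral.integral_mono_on hab intervalIntegrable_const
          (hfc.add intervalIntegrable_const) hpoint
    _ = (∫ x in a..b, f x) + (b - a) * ∫ x in a..b, |f' x| := by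
        rw [intervalIntegral.integral_add hfc intervalIntegrable_const,
          intervalIntegral.integral_const, smul_eq_mul]

theorem mul_tsum_le_integral_add_mul_integral_abs_deriv_s4 {f f' : ℝ → ℝ} {δ : ℝ} (hδ : 0 < δ)
    (hf0 : 0 ≤ f) (hf : ∀ x, HasDerivAt f (f' x) x) (hfi : Integrable f)
    (hf'i : Integrable f') :
    δ * ∑' n : ℤ, f (δ * n) ≤ (∫ x, f x) + δ * ∫ x, |f' x| := by
  have hcell : ∀ n : ℤ, δ * f (δ * n) ≤
      (∫ x in δ * n..δ * (n + 1), f x) + δ * ∫ x in δ * n..δ * (n + 1), |f' x| := by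
    intro n
    have := sub_mul_le_intervalIntegral_add_mul_intervalIntegral_abs
      (by nlinarith) (fun x _ => hf x)
      (hf'i.intervalIntegrable (a := δ * n) (b := δ * (n + 1)))
    rwa [show δ * (n + 1) - δ * n = δ by ring] at this
  have hsum := (hfi.hasSum_intervalIntegral_mul_intCast hδ).add
    ((hf'i.abs.hasSum_intervalIntegral_mul_intCast hδ).mul_left δ)
  rw [← tsum_mul_left]
  have hsummable : Summable fun n : ℤ => δ * f (δ * n) :=
    .of_nonneg_of_le (fun n => mul_nonneg hδ.le (hf0 _)) hcell hsum.summable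
  exact hasSum_le hcell hsummable.hasSum hsum

theorem mul_tsum_norm_sq_le {F : Type*} [NormedAddCommGroup F] [InnerProductSpace ℝ F]
    {v : ℝ → F} {δ : ℝ} (hδ : 0 < δ) (hv : ContDiff ℝ 1 v)
    (hv0 : Integrable fun x => ‖v x‖ ^ 2) (hv1 : Integrable fun x => ‖deriv v x‖ ^ 2) :
    δ * ∑' n : ℤ, ‖v (δ * n)‖ ^ 2 ≤ (∫ x, ‖v x‖ ^ 2) +
      2 * δ * √(∫ x, ‖v x‖ ^ 2) * √(∫ x, ‖deriv v x‖ ^ 2) := by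
  have hvc : Continuous v := hv.continuous
  have hv'c : Continuous (deriv v) := hv.continuous_deriv le_rfl
  have hL2 : MemLp (fun x => ‖v x‖) 2 :=
    (memLp_two_iff_integrable_sq hvc.norm.aestronglyMeasurable).2 hv0
  have hL2' : MemLp (fun x => ‖deriv v x‖) 2 :=
    (memLp_two_iff_integrable_sq hv'c.norm.aestronglyMeasurable).2 hv1
  have habs : ∀ x, |2 * ⟪v x, deriv v x⟫| ≤ 2 * (‖v x‖ * ‖deriv v x‖) := fun x => by
    rw [abs_mul, abs_two]
    exact mul_le_mul_of_nonneg_left (abs_real_inner_le_norm _ _) zero_le_two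
  have hprod : Integrable fun x => 2 * (‖v x‖ * ‖deriv v x‖) :=
    (hL2.integrable_mul hL2').const_mul 2
  have hderiv : Integrable fun x => 2 * ⟪v x, deriv v x⟫ :=
    hprod.mono' (continuous_const.mul (hvc.inner hv'c)).aestronglyMeasurable (ae_of_all _ habs)
  calc δ * ∑' n : ℤ, ‖v (δ * n)‖ ^ 2
      ≤ (∫ x, ‖v x‖ ^ 2) + δ * ∫ x, |2 * ⟪v x, deriv v x⟫| :=
        mul_tsum_le_integral_add_mul_integral_abs_deriv_s4 hδ (fun _ => sq_nonneg _)
          (fun x => ((hv.differentiable one_ne_zero) x).hasDerivAt.norm_sq) hv0 hderiv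
    _ ≤ (∫ x, ‖v x‖ ^ 2) + δ * (2 * ∫ x, ‖v x‖ * ‖deriv v x‖) := by
        rw [← integral_const_mul (2 : ℝ)]
        gcongr _ + δ * ?_
        exact integral_mono hderiv.abs hprod habs
    _ ≤ (∫ x, ‖v x‖ ^ 2) + δ * (2 * (√(∫ x, ‖v x‖ ^ 2) * √(∫ x, ‖deriv v x‖ ^ 2))) := by
        gcongr
        exact integral_mul_le_sqrt_integral_sq_mul_sqrt (fun _ => norm_nonneg _)
          (fun _ => norm_nonneg _) hL2 hL2'
    _ = (∫ x, ‖v x‖ ^ 2) + 2 * δ * √(∫ x, ‖v x‖ ^ 2) * √(∫ x, ‖deriv v x‖ ^ 2) := by ring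

end Sampling

section DifferenceQuotient

variable {δ : ℝ}

theorem contDiff_Dquot {n : WithTop ℕ∞} {u : ℝ → C2} (hu : ContDiff ℝ n u) :
    ContDiff ℝ n (Dquot δ u) :=
  ((hu.comp (contDiff_id.add contDiff_const)).sub hu).const_smul δ⁻¹

theorem contDiff_iterate_Dquot {n : WithTop ℕ∞} {u : ℝ → C2} (hu : ContDiff ℝ n u) (j : ℕ) :
    ContDiff ℝ n ((Dquot δ)^[j] u) := by
  induction j with
  | zero => exact hu
  | succ k ih => rw [Function.iterate_succ_apply']; exact contDiff_Dquot ih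

theorem deriv_Dquot {u : ℝ → C2} (hu : Differentiable ℝ u) :
    deriv (Dquot δ u) = Dquot δ (deriv u) := by
  funext x
  exact (((hu (x + δ)).hasDerivAt.comp_add_const x δ).sub (hu x).hasDerivAt).const_smul δ⁻¹
    |>.deriv

theorem deriv_iterate_Dquot {u : ℝ → C2} (hu : ContDiff ℝ 1 u) (j : ℕ) :
    deriv ((Dquot δ)^[j] u) = (Dquot δ)^[j] (deriv u) := by
  induction j with
  | zero => rfl
  | succ k ih =>
    rw [Function.iterate_succ_apply', Function.iterate_succ_apply', ← ih,
      deriv_Dquot ((contDiff_iterate_Dquot hu k).differentiable one_ne_zero)]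

theorem integrable_norm_sq_iterate_Dquot (hδ : 0 < δ) (k : ℕ) {w : ℝ → C2}
    (hw : ContDiff ℝ k w) (hk : Integrable fun x => ‖iteratedDeriv k w x‖ ^ 2) :
    Integrable fun x => ‖(Dquot δ)^[k] w x‖ ^ 2 := by
  induction k generalizing w with
  | zero => simpa using hk
  | succ k ih =>
    push_cast at hw
    rw [Function.iterate_succ_apply']
    refine integrable_norm_sq_slope (contDiff_iterate_Dquot hw.one_of_succ k) hδ ?_
    rw [deriv_iterate_Dquot hw.one_of_succ]
    exact ih hw.deriv' (by rwa [← iteratedDeriv_succ'])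

theorem integral_norm_sq_iterate_Dquot_le (hδ : 0 < δ) (k : ℕ) {w : ℝ → C2}
    (hw : ContDiff ℝ k w) (hk : Integrable fun x => ‖iteratedDeriv k w x‖ ^ 2) :
    ∫ x, ‖(Dquot δ)^[k] w x‖ ^ 2 ≤ ∫ x, ‖iteratedDeriv k w x‖ ^ 2 := by
  induction k generalizing w with
  | zero => simp
  | succ k ih =>
    push_cast at hw
    have hk' : Integrable fun x => ‖iteratedDeriv k (deriv w) x‖ ^ 2 := by
      rwa [← iteratedDeriv_succ']
    rw [Function.iterate_succ_apply', iteratedDeriv_succ']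
    calc ∫ x, ‖Dquot δ ((Dquot δ)^[k] w) x‖ ^ 2
        ≤ ∫ x, ‖deriv ((Dquot δ)^[k] w) x‖ ^ 2 := by
          refine integral_norm_sq_slope_le (contDiff_iterate_Dquot hw.one_of_succ k) hδ ?_
          rw [deriv_iterate_Dquot hw.one_of_succ]
          exact integrable_norm_sq_iterate_Dquot hδ k hw.deriv' hk'
      _ = ∫ x, ‖(Dquot δ)^[k] (deriv w) x‖ ^ 2 := by rw [deriv_iterate_Dquot hw.one_of_succ]
      _ ≤ ∫ x, ‖iteratedDeriv k (deriv w) x‖ ^ 2 := ih hw.deriv' hk'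

end DifferenceQuotient

/-- For `u ∈ H^{s+1}(ℝ,ℂ²)`, `0 ≤ j ≤ s` and `δ > 0`, the iterated difference quotient
satisfies `δ ∑_{x ∈ δℤ} ‖D_δ^j u(x)‖² ≤ ‖∂_x^j u‖²_{L²} + 2δ ‖∂_x^j u‖_{L²} ‖∂_x^{j+1} u‖_{L²}`. -/
theorem latticeSum_iteratedDifference_le (s : ℕ) (j : ℕ) (hj : j ≤ s)
    (δ : ℝ) (hδ : 0 < δ) (u : ℝ → C2) (hu : InH (s + 1) u) :
    δ * ∑' n : ℤ, ‖(Dquot δ)^[j] u (δ * n)‖ ^ 2 ≤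
      (∫ x : ℝ, ‖iteratedDeriv j u x‖ ^ 2) +
        2 * δ * L2Norm (iteratedDeriv j u) * L2Norm (iteratedDeriv (j + 1) u) := by
  obtain ⟨hsmooth, hL2⟩ := hu
  have hu1 : ContDiff ℝ 1 u := hsmooth.of_le (by exact_mod_cast (by omega : 1 ≤ s + 1))
  have hu_j : ContDiff ℝ j u := hsmooth.of_le (by exact_mod_cast (by omega : j ≤ s + 1))
  have hu'_j : ContDiff ℝ j (deriv u) :=
    (hsmooth.of_le (by exact_mod_cast (by omega : j + 1 ≤ s + 1)) : ContDiff ℝ (j + 1) u).deriv'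
  have hL2_j := hL2 j (by omega)
  have hL2_j' : Integrable fun x => ‖iteratedDeriv j (deriv u) x‖ ^ 2 := by
    rw [← iteratedDeriv_succ']; exact hL2 (j + 1) (by omega)
  set v := (Dquot δ)^[j] u
  have hderiv : deriv v = (Dquot δ)^[j] (deriv u) := deriv_iterate_Dquot hu1 j
  have hv0 := integral_norm_sq_iterate_Dquot_le hδ j hu_j hL2_j
  have hv1 := integral_norm_sq_iterate_Dquot_le hδ j hu'_j hL2_j'
  rw [← hderiv] at hv1
  let _ : InnerProductSpace ℝ C2 := InnerProductSpace.rclikeToReal ℂ C2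
  calc δ * ∑' n : ℤ, ‖v (δ * n)‖ ^ 2
      ≤ (∫ x, ‖v x‖ ^ 2) + 2 * δ * √(∫ x, ‖v x‖ ^ 2) * √(∫ x, ‖deriv v x‖ ^ 2) := by
        refine mul_tsum_norm_sq_le hδ (contDiff_iterate_Dquot hu1 j)
          (integrable_norm_sq_iterate_Dquot hδ j hu_j hL2_j) ?_
        rw [hderiv]
        exact integrable_norm_sq_iterate_Dquot hδ j hu'_j hL2_j'
    _ ≤ _ := by
        rw [L2Norm, L2Norm, iteratedDeriv_succ']
        gcongr
end
end

section
/- One step of the split evolution equals one step of the quantum walk: if v(t₁,t₂,t₃) solves i∂_{t₁}v = G(v) on the t₁-segment, then i∂_{t₂}v = Bv on the t₂-segment, then i∂_{t₃}v = Av on the t₃-segment of the cube [mδ,(m+1)δ]³, with v(mδ,mδ,mδ) = w, then v((m+1)δ,(m+1)δ,(m+1)δ) = S_δ C_δ N_δ w, where N_δ w = e^{-iδ g(⟨w,γw⟩_{ℂ²})γ} w (pointwise), C_δ w = e^{-iδ s(x)·σ} w (pointwise), and S_δ = e^{iδA} is the shift diag(e^{-δ∂_x}, e^{δ∂_x}).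 -/
open MeasureTheory Real

noncomputable section

/-- The Pauli matrices `σ₀, σ₁, σ₂, σ₃`. -/
def pauli : Fin 4 → Matrix (Fin 2) (Fin 2) ℂ
  | 0 => !![1, 0; 0, 1]
  | 1 => !![0, 1; 1, 0]
  | 2 => !![0, -Complex.I; Complex.I, 0]
  | 3 => !![1, 0; 0, -1]

/-- The coin matrix `s(x)·σ = ∑_α s_α(x) σ_α`. -/
def coinMatrix (s : ℝ → Fin 4 → ℝ) (x : ℝ) : Matrix (Fin 2) (Fin 2) ℂ :=
  ∑ α : Fin 4, (s x α : ℂ) • pauli α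

/-- The quantity `⟨w, γ w⟩_{ℂ²}` (a real number since `γ` is Hermitian). -/
def gammaForm (γ : Matrix (Fin 2) (Fin 2) ℂ) (w : C2) : ℝ :=
  (inner ℂ w (WithLp.toLp 2 (γ.mulVec w) : C2) : ℂ).re

/-- The pointwise nonlinear coin `(N_δ w)(x) = e^{-iδ g(⟨w(x),γw(x)⟩)γ} w(x)`. -/
def Nstep (δ : ℝ) (γ : Matrix (Fin 2) (Fin 2) ℂ) (g : ℝ → ℝ) (w : ℝ → C2) : ℝ → C2 :=
  fun x => WithLp.toLp 2 ((NormedSpace.exp ((-(Complex.I * δ * g (gammaForm γ (w x)))) • γ)).mulVec (w x))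

/-- The pointwise linear coin `(C_δ w)(x) = e^{-iδ s(x)·σ} w(x)`. -/
def Cstep (δ : ℝ) (s : ℝ → Fin 4 → ℝ) (w : ℝ → C2) : ℝ → C2 :=
  fun x => WithLp.toLp 2 ((NormedSpace.exp ((-(Complex.I * δ)) • coinMatrix s x)).mulVec (w x))

/-- The shift `S_δ = e^{iδA} = diag(e^{-δ∂_x}, e^{δ∂_x})`. -/
def Sstep (δ : ℝ) (w : ℝ → C2) : ℝ → C2 :=
  fun x => (WithLp.toLp 2 ![w (x - δ) 0, w (x + δ) 1] : C2)

set_option maxHeartbeats 2000000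
set_option synthInstance.maxHeartbeats 400000

open NormedSpace Set Asymptotics in
lemma toEuclideanCLM_exp' (M : Matrix (Fin 2) (Fin 2) ℂ) :
    Matrix.toEuclideanCLM (𝕜 := ℂ) (NormedSpace.exp M) = NormedSpace.exp (Matrix.toEuclideanCLM (𝕜 := ℂ) M) := by
  set e := Matrix.toEuclideanCLM (n := Fin 2) (𝕜 := ℂ) with he
  let φ : (C2 →L[ℂ] C2) →ₗ[ℂ] Matrix (Fin 2) (Fin 2) ℂ :=
    { toFun := fun x => e.symm x
      map_add' := fun x y => map_add _ _ _
      map_smul' := fun c x => map_smul _ _ _ }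
  have key : e.symm (NormedSpace.exp (e M)) = NormedSpace.exp M := by
    have hsum : Summable fun n : ℕ => (n.factorial : ℂ)⁻¹ • (e M) ^ n :=
      expSeries_summable' (𝕂 := ℂ) (e M)
    calc e.symm (NormedSpace.exp (e M))
        = φ.toContinuousLinearMap (∑' n : ℕ, (n.factorial : ℂ)⁻¹ • (e M) ^ n) := by
          rw [exp_eq_tsum (𝕂 := ℂ)]; rfl
      _ = ∑' n : ℕ, φ.toContinuousLinearMap ((n.factorial : ℂ)⁻¹ • (e M) ^ n) :=
          φ.toContinuousLinearMap.map_tsum hsum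
      _ = ∑' n : ℕ, (n.factorial : ℂ)⁻¹ • M ^ n := by
          refine tsum_congr fun n => ?_
          show e.symm ((n.factorial : ℂ)⁻¹ • (e M) ^ n) = _
          rw [_root_.map_smul, map_pow, StarAlgEquiv.symm_apply_apply]
      _ = NormedSpace.exp M := by rw [exp_eq_tsum (𝕂 := ℂ)]
  have h2 := congrArg e key
  rw [StarAlgEquiv.apply_symm_apply] at h2
  exact h2.symm

open NormedSpace Set in
lemma ode_exp' (L : C2 →L[ℂ] C2) (u : ℝ → C2) (a b : ℝ) (hab : a ≤ b)
    (h : ∀ t ∈ Set.Icc a b, HasDerivWithinAt u (L (u t)) (Set.Icc a b) t) :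
    u b = NormedSpace.exp (((b - a : ℝ) : ℂ) • L) (u a) := by
  set E : ℝ → (C2 →L[ℂ] C2) := fun t => NormedSpace.exp (((a : ℂ) - t) • L) with hE
  have hEd : ∀ t : ℝ, HasDerivAt E (-(E t * L)) t := by
    intro t
    have h1 : ∀ z : ℂ, HasDerivAt (fun z : ℂ => NormedSpace.exp (((a : ℂ) - z) • L))
        (-(NormedSpace.exp (((a : ℂ) - z) • L) * L)) z := by
      intro z
      have hout : HasDerivAt (fun w : ℂ => NormedSpace.exp (w • L)) (NormedSpace.exp (((a:ℂ) - z) • L) * L)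
          ((a:ℂ) - z) := hasDerivAt_exp_smul_const (𝕂 := ℂ) L _
      have hin : HasDerivAt (fun z : ℂ => (a : ℂ) - z) (-1) z := by
        simpa using (hasDerivAt_id z).const_sub (a : ℂ)
      have := hout.scomp z hin
      simpa [Function.comp_def] using this
    have h2 : HasDerivAt (fun y : ℝ => ((y : ℂ))) ((1:ℂ)) t := by
      simpa using (hasDerivAt_id t).ofReal_comp
    have := (h1 t).scomp t h2
    simpa [hE, Function.comp_def] using this
  have hEcont : Continuous E := by
    rw [continuous_iff_continuousAt]; exact fun t => (hEd t).continuousAt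
  set R := ContinuousLinearMap.restrictScalarsL ℂ C2 C2 ℝ ℝ with hR
  have key : ∀ t ∈ Set.Icc a b, E t (u t) = u a := by
    have hucont : ContinuousOn u (Set.Icc a b) := fun t ht => (h t ht).continuousWithinAt
    have hcont : ContinuousOn (fun t => R (E t) (u t)) (Set.Icc a b) :=
      ((R.continuous.comp hEcont).continuousOn).clm_apply hucont
    have hderiv : ∀ t ∈ Set.Ico a b,
        HasDerivWithinAt (fun t => R (E t) (u t)) 0 (Set.Ici t) t := by
      intro t ht
      have hu : HasDerivWithinAt u (L (u t)) (Set.Ici t) t :=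
        (h t (Set.mem_Icc_of_Ico ht)).mono_of_mem_nhdsWithin (Icc_mem_nhdsGE_of_mem ht)
      have hEw : HasDerivWithinAt (fun t => R (E t)) (R (-(E t * L))) (Set.Ici t) t :=
        (R.hasFDerivAt.comp_hasDerivAt t (hEd t)).hasDerivWithinAt
      have hcomb := hEw.clm_apply hu
      have hz : R (-(E t * L)) (u t) + R (E t) (L (u t)) = 0 := by
        have h4 : (R (E t * L)) (u t) = (R (E t)) (L (u t)) := rfl
        simp only [map_neg, ContinuousLinearMap.neg_apply, h4]
        simp
      rw [hz] at hcomb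
      exact hcomb
    intro t ht
    have hconst := constant_of_has_deriv_right_zero hcont hderiv t ht
    have ha0 : E a = 1 := by
      rw [hE]
      show NormedSpace.exp (((a:ℂ) - (a:ℂ)) • L) = 1
      rw [sub_self, zero_smul ℂ L, NormedSpace.exp_zero]
    show R (E t) (u t) = u a
    rw [hconst, ha0]
    rfl
  have hb : E b (u b) = u a := key b ⟨hab, le_refl b⟩
  have hzero : (((b - a : ℝ)) : ℂ) • L + ((a : ℂ) - b) • L = (0 : C2 →L[ℂ] C2) := by
    have hco : ((b - a : ℝ) : ℂ) + ((a:ℂ) - b) = 0 := by push_cast; ring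
    calc ((b - a : ℝ) : ℂ) • L + ((a:ℂ) - (b:ℂ)) • L
        = (((b - a : ℝ) : ℂ) + ((a:ℂ) - (b:ℂ))) • L := (add_smul _ _ L).symm
      _ = (0:ℂ) • L := by rw [hco]
      _ = 0 := zero_smul ℂ L
  have hinv : NormedSpace.exp ((((b - a : ℝ)) : ℂ) • L) * NormedSpace.exp (((a : ℂ) - b) • L) = 1 := by
    letI : NormedAlgebra ℚ (C2 →L[ℂ] C2) := .restrictScalars ℚ ℂ _
    rw [← exp_add_of_commute (((Commute.refl L).smul_left _).smul_right _), hzero, NormedSpace.exp_zero]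
  calc u b = (NormedSpace.exp ((((b - a : ℝ)) : ℂ) • L) * E b) (u b) := by
        rw [hE]; rw [hinv]; simp
    _ = NormedSpace.exp ((((b - a : ℝ)) : ℂ) • L) (E b (u b)) := by rw [ContinuousLinearMap.mul_apply]
    _ = NormedSpace.exp (((b - a : ℝ) : ℂ) • L) (u a) := by rw [hb]

open NormedSpace Set in
lemma ode_exp_mat' (M : Matrix (Fin 2) (Fin 2) ℂ) (u : ℝ → C2) (a b : ℝ) (hab : a ≤ b)
    (h : ∀ t ∈ Set.Icc a b, HasDerivWithinAt u (WithLp.toLp 2 (M.mulVec (u t)) : C2) (Set.Icc a b) t) :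
    u b = (WithLp.toLp 2 ((NormedSpace.exp (((b - a : ℝ) : ℂ) • M)).mulVec (u a)) : C2) := by
  have h' : ∀ t ∈ Set.Icc a b,
      HasDerivWithinAt u ((Matrix.toEuclideanCLM (𝕜 := ℂ) M) (u t)) (Set.Icc a b) t := h
  have h0 := ode_exp' _ u a b hab h'
  rw [h0]
  have h2 : (((b - a : ℝ) : ℂ)) • (Matrix.toEuclideanCLM (𝕜 := ℂ) M)
      = Matrix.toEuclideanCLM (𝕜 := ℂ) (((b - a : ℝ) : ℂ) • M) := (_root_.map_smul _ _ _).symm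
  rw [h2, ← toEuclideanCLM_exp']
  rfl

open NormedSpace Set in
lemma gamma_conserved' (γ : Matrix (Fin 2) (Fin 2) ℂ) (hγ : γ.IsHermitian)
    (g : ℝ → ℝ) (u : ℝ → C2) (a b : ℝ)
    (h : ∀ t ∈ Set.Icc a b, HasDerivWithinAt u
      ((-(Complex.I * g (gammaForm γ (u t)))) • (WithLp.toLp 2 (γ.mulVec (u t)) : C2)) (Set.Icc a b) t) :
    ∀ t ∈ Set.Icc a b, gammaForm γ (u t) = gammaForm γ (u a) := by
  set eγ := Matrix.toEuclideanCLM (𝕜 := ℂ) γ with heγ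
  have hsa : IsSelfAdjoint eγ := by
    have h1 : star γ = γ := hγ
    rw [IsSelfAdjoint, heγ, ← map_star, h1]
  have hsym := ContinuousLinearMap.isSelfAdjoint_iff_isSymmetric.mp hsa
  have hq0 : ∀ t ∈ Set.Icc a b,
      HasDerivWithinAt (fun τ => (inner ℂ (u τ) (eγ (u τ)) : ℂ)) 0 (Set.Icc a b) t := by
    intro t ht
    set c : ℂ := -(Complex.I * g (gammaForm γ (u t))) with hc
    have hu : HasDerivWithinAt u (c • (eγ (u t))) (Set.Icc a b) t := h t ht
    have hgu : HasDerivWithinAt (fun τ => eγ (u τ)) ((eγ.restrictScalars ℝ) (c • eγ (u t)))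
        (Set.Icc a b) t :=
      (eγ.restrictScalars ℝ).hasFDerivAt.comp_hasDerivWithinAt t hu
    have hq := hu.inner ℂ hgu
    have hval : (inner ℂ (u t) ((eγ.restrictScalars ℝ) (c • eγ (u t))) : ℂ)
        + (inner ℂ (c • eγ (u t)) (eγ (u t)) : ℂ) = 0 := by
      have h1 : ((eγ.restrictScalars ℝ) (c • eγ (u t))) = c • eγ (eγ (u t)) := by
        simp
      rw [h1, inner_smul_right, inner_smul_left]
      have h2 : (inner ℂ (u t) (eγ (eγ (u t))) : ℂ) = inner ℂ (eγ (u t)) (eγ (u t)) :=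
        (hsym (u t) (eγ (u t))).symm
      rw [h2]
      have h3 : c + (starRingEnd ℂ) c = 0 := by
        rw [hc]
        simp [Complex.ext_iff]
      linear_combination (inner ℂ (eγ (u t)) (eγ (u t)) : ℂ) * h3
    rw [hval] at hq
    exact hq
  have hr : ∀ t ∈ Set.Icc a b,
      HasDerivWithinAt (fun τ => gammaForm γ (u τ)) 0 (Set.Icc a b) t := by
    intro t ht
    have h5 := Complex.reCLM.hasFDerivAt.comp_hasDerivWithinAt t (hq0 t ht)
    have h6 : Complex.reCLM (0 : ℂ) = (0 : ℝ) := by simp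
    rw [h6] at h5
    exact h5
  have hcont : ContinuousOn (fun τ => gammaForm γ (u τ)) (Set.Icc a b) :=
    fun t ht => (hr t ht).continuousWithinAt
  have hder' : ∀ t ∈ Set.Ico a b,
      HasDerivWithinAt (fun τ => gammaForm γ (u τ)) 0 (Set.Ici t) t := fun t ht =>
    (hr t (Set.mem_Icc_of_Ico ht)).mono_of_mem_nhdsWithin (Icc_mem_nhdsGE_of_mem ht)
  exact constant_of_has_deriv_right_zero hcont hder'

open Set Asymptotics in
lemma transport' (f d : ℝ → ℝ → ℂ) (a b : ℝ) (hab : a ≤ b) (ε : ℝ)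
    (hd : Continuous fun p : ℝ × ℝ => d p.1 p.2)
    (hx : ∀ t ∈ Set.Icc a b, ∀ x, HasDerivAt (f t) (d t x) x)
    (ht : ∀ x, ∀ t ∈ Set.Icc a b,
      HasDerivWithinAt (fun τ => f τ x) (ε • d t x) (Set.Icc a b) t)
    (x : ℝ) : f b x = f a (x + ε * (b - a)) := by
  set y : ℝ → ℝ := fun t => x + ε * (b - t) with hy
  have hderiv : ∀ t₀ ∈ Set.Icc a b,
      HasDerivWithinAt (fun τ => f τ (y τ)) 0 (Set.Icc a b) t₀ := by
    intro t₀ ht₀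
    set D := d t₀ (y t₀) with hD
    have hB : HasDerivWithinAt (fun τ => f τ (y t₀)) (ε • D) (Set.Icc a b) t₀ :=
      ht (y t₀) t₀ ht₀
    have hA : HasDerivWithinAt (fun τ => f τ (y τ) - f τ (y t₀)) (-(ε • D))
        (Set.Icc a b) t₀ := by
      rw [hasDerivWithinAt_iff_isLittleO]
      rw [isLittleO_iff]
      intro c hc
      have hc' : 0 < c / (|ε| + 1) := by positivity
      set c' := c / (|ε| + 1) with hc'def
      obtain ⟨δ', hδ', hcd⟩ := Metric.continuousAt_iff.mp (hd.continuousAt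
        (x := ((t₀ : ℝ), y t₀))) c' hc'
      set r := δ' / (|ε| + 1) with hrdef
      have hr : 0 < r := by positivity
      have h1 : ∀ᶠ τ in nhdsWithin t₀ (Set.Icc a b), |τ - t₀| < r := by
        apply Filter.Eventually.filter_mono nhdsWithin_le_nhds
        have := Metric.ball_mem_nhds t₀ hr
        filter_upwards [this] with τ hτ
        simpa [Real.dist_eq] using hτ
      have h2 : ∀ᶠ τ in nhdsWithin t₀ (Set.Icc a b), τ ∈ Set.Icc a b :=
        eventually_mem_nhdsWithin
      filter_upwards [h1, h2] with τ hτr hτm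
      have hyd : y τ - y t₀ = -(ε * (τ - t₀)) := by simp [hy]; ring
      have hydabs : |y τ - y t₀| ≤ |ε| * |τ - t₀| := by
        rw [hyd, abs_neg, abs_mul]
      have hcd2 : Continuous fun ξ => d τ ξ :=
        hd.comp (continuous_const.prodMk continuous_id)
      have hFTC : (∫ ξ in (y t₀)..(y τ), d τ ξ) = f τ (y τ) - f τ (y t₀) :=
        intervalIntegral.integral_eq_sub_of_hasDerivAt
          (fun ξ _ => hx τ hτm ξ) (hcd2.intervalIntegrable _ _)
      have hconstint : (∫ _ξ in (y t₀)..(y τ), D) = (y τ - y t₀) • D := by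
        simp
      have hdiff : f τ (y τ) - f τ (y t₀) - (y τ - y t₀) • D
          = ∫ ξ in (y t₀)..(y τ), (d τ ξ - D) := by
        rw [intervalIntegral.integral_sub (hcd2.intervalIntegrable _ _)
          (intervalIntegrable_const), hFTC, hconstint]
      have hbound : ‖∫ ξ in (y t₀)..(y τ), (d τ ξ - D)‖ ≤ c' * |y τ - y t₀| := by
        apply intervalIntegral.norm_integral_le_of_norm_le_const
        intro ξ hξ
        have hξ' : ξ ∈ Set.uIcc (y t₀) (y τ) := Set.uIoc_subset_uIcc hξ
        have hξabs : |ξ - y t₀| ≤ |y τ - y t₀| := by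
          rcases Set.mem_uIcc.mp hξ' with ⟨ha1, ha2⟩ | ⟨ha1, ha2⟩ <;>
            rw [abs_sub_le_iff] <;> constructor <;>
            nlinarith [le_abs_self (y τ - y t₀), neg_abs_le (y τ - y t₀)]
        have hdist : dist (τ, ξ) ((t₀ : ℝ), y t₀) < δ' := by
          rw [Prod.dist_eq]
          apply max_lt
          · rw [Real.dist_eq]
            calc |τ - t₀| < r := hτr
              _ ≤ δ' := by
                  rw [hrdef]; rw [div_le_iff₀ (by positivity)]
                  nlinarith [abs_nonneg ε]
          · rw [Real.dist_eq]
            calc |ξ - y t₀| ≤ |y τ - y t₀| := hξabs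
              _ ≤ |ε| * |τ - t₀| := hydabs
              _ < |ε| * r + r := by nlinarith [abs_nonneg ε, abs_nonneg (τ - t₀)]
              _ ≤ δ' := by
                  have : |ε| * r + r = δ' := by
                    rw [hrdef]; field_simp
                  exact le_of_eq this
        have := hcd hdist
        rw [dist_eq_norm] at this
        exact le_of_lt this
      have hexpr : f τ (y τ) - f τ (y t₀) - (f t₀ (y t₀) - f t₀ (y t₀))
          - (τ - t₀) • (-(ε • D)) = f τ (y τ) - f τ (y t₀) - (y τ - y t₀) • D := by
        rw [hyd]
        module
      rw [hexpr, hdiff]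
      calc ‖∫ ξ in (y t₀)..(y τ), (d τ ξ - D)‖ ≤ c' * |y τ - y t₀| := hbound
        _ ≤ c' * (|ε| * |τ - t₀|) := by
            apply mul_le_mul_of_nonneg_left hydabs (le_of_lt hc')
        _ ≤ c * |τ - t₀| := by
            rw [hc'def]
            rw [div_mul_eq_mul_div, div_le_iff₀ (by positivity)]
            nlinarith [abs_nonneg ε, abs_nonneg (τ - t₀), hc.le]
        _ = c * ‖τ - t₀‖ := by rw [Real.norm_eq_abs]
    have hsum := hA.add hB
    have heq : (fun τ => f τ (y τ) - f τ (y t₀) + f τ (y t₀)) = fun τ => f τ (y τ) := by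
      funext τ; ring
    rw [show ((fun τ => f τ (y τ) - f τ (y t₀)) + fun τ => f τ (y t₀)) = fun τ => f τ (y τ) from heq] at hsum
    simpa using hsum
  have hcont : ContinuousOn (fun τ => f τ (y τ)) (Set.Icc a b) :=
    fun t ht => (hderiv t ht).continuousWithinAt
  have hder' : ∀ t ∈ Set.Ico a b,
      HasDerivWithinAt (fun τ => f τ (y τ)) 0 (Set.Ici t) t := fun t ht =>
    (hderiv t (Set.mem_Icc_of_Ico ht)).mono_of_mem_nhdsWithin (Icc_mem_nhdsGE_of_mem ht)
  have hfin := constant_of_has_deriv_right_zero hcont hder' b ⟨hab, le_refl b⟩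
  have hyb : y b = x := by simp [hy]
  have hya : y a = x + ε * (b - a) := by simp [hy]
  rw [hyb, hya] at hfin
  exact hfin

/-- One step of the split evolution on the cube `[mδ,(m+1)δ]³` equals one step of the
quantum walk: if `v(t₁,t₂,t₃)` solves `i∂_{t₁}v = G(v)` (pointwise in `x`), then
`i∂_{t₂}v = Bv`, then `i∂_{t₃}v = Av` (with `A = -iσ₃∂_x`, `B = s(x)·σ`,
`G(v) = g(⟨v,γv⟩)γv`), starting from `v(mδ,mδ,mδ) = w`, then
`v((m+1)δ,(m+1)δ,(m+1)δ) = S_δ C_δ N_δ w`. -/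
theorem split_step_eq_walk_step
    (γ : Matrix (Fin 2) (Fin 2) ℂ) (hγ : γ.IsHermitian)
    (g : ℝ → ℝ) (hg : ContDiff ℝ (⊤ : ℕ∞) g)
    (s : ℝ → Fin 4 → ℝ) (hs : ContDiff ℝ (⊤ : ℕ∞) s) (hsb : ∃ K, ∀ x α, |s x α| ≤ K)
    (δ : ℝ) (hδ : 0 < δ) (m : ℕ)
    (w : ℝ → C2) (v : ℝ → ℝ → ℝ → ℝ → C2) (dv : ℝ → ℝ → C2)
    (a b : ℝ) (ha : a = m * δ) (hb : b = (m + 1) * δ)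
    -- initial condition on the diagonal corner of the cube
    (h0 : ∀ x, v a a a x = w x)
    -- first (nonlinear) flow: i ∂_{t₁} v = g(⟨v,γv⟩) γ v on the t₁-segment
    (h1 : ∀ x, ∀ t ∈ Set.Icc a b,
      HasDerivWithinAt (fun τ => v τ a a x)
        ((-(Complex.I * g (gammaForm γ (v t a a x)))) • (WithLp.toLp 2 (γ.mulVec (v t a a x)) : C2))
        (Set.Icc a b) t)
    -- second flow: i ∂_{t₂} v = (s(x)·σ) v on the t₂-segment
    (h2 : ∀ x, ∀ t ∈ Set.Icc a b,
      HasDerivWithinAt (fun τ => v b τ a x)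
        ((-Complex.I : ℂ) • (WithLp.toLp 2 ((coinMatrix s x).mulVec (v b t a x)) : C2))
        (Set.Icc a b) t)
    -- spatial derivative of v on the t₃-segment
    (h3x : ∀ t ∈ Set.Icc a b, ∀ x, HasDerivAt (fun y => v b b t y) (dv t x) x)
    (h3cont : Continuous fun p : ℝ × ℝ => dv p.1 p.2)
    -- third flow: i ∂_{t₃} v = -iσ₃ ∂_x v on the t₃-segment
    (h3 : ∀ x, ∀ t ∈ Set.Icc a b,
      HasDerivWithinAt (fun τ => v b b τ x)
        (-(WithLp.toLp 2 ((pauli 3).mulVec (dv t x)) : C2)) (Set.Icc a b) t) :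
    ∀ x, v b b b x = Sstep δ (Cstep δ s (Nstep δ γ g w)) x := by
  have hba : b - a = δ := by rw [ha, hb]; push_cast; ring
  have hab : a ≤ b := by linarith
  -- Step 1: nonlinear coin
  have hstep1 : ∀ z : ℝ, v b a a z = Nstep δ γ g w z := by
    intro z
    have hcons := gamma_conserved' γ hγ g (fun τ => v τ a a z) a b (h1 z)
    have hwz : gammaForm γ (v a a a z) = gammaForm γ (w z) := by rw [h0]
    set c₀ : ℂ := -(Complex.I * g (gammaForm γ (w z))) with hc₀
    have hode : ∀ t ∈ Set.Icc a b, HasDerivWithinAt (fun τ => v τ a a z)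
        (WithLp.toLp 2 ((c₀ • γ).mulVec (v t a a z)) : C2) (Set.Icc a b) t := by
      intro t ht
      have hder := h1 z t ht
      have e1 : gammaForm γ (v t a a z) = gammaForm γ (w z) := (hcons t ht).trans hwz
      rw [e1] at hder
      have e2 : (WithLp.toLp 2 ((c₀ • γ).mulVec (v t a a z)) : C2) = c₀ • (WithLp.toLp 2 (γ.mulVec (v t a a z)) : C2) := by
        rw [Matrix.smul_mulVec, WithLp.toLp_smul]
      rw [e2]
      exact hder
    have hfin := ode_exp_mat' (c₀ • γ) (fun τ => v τ a a z) a b hab hode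
    simp only at hfin
    rw [h0 z] at hfin
    have e3 : (((b - a : ℝ) : ℂ)) • (c₀ • γ)
        = (-(Complex.I * δ * g (gammaForm γ (w z)))) • γ := by
      rw [smul_smul]
      congr 1
      rw [hc₀, hba]
      push_cast
      ring
    rw [e3] at hfin
    exact hfin
  -- Step 2: linear coin
  have hstep2 : ∀ z : ℝ, v b b a z = Cstep δ s (Nstep δ γ g w) z := by
    intro z
    have hode : ∀ t ∈ Set.Icc a b, HasDerivWithinAt (fun τ => v b τ a z)
        (WithLp.toLp 2 ((((-Complex.I : ℂ)) • coinMatrix s z).mulVec (v b t a z)) : C2)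
        (Set.Icc a b) t := by
      intro t ht
      have hder := h2 z t ht
      have e2 : (WithLp.toLp 2 ((((-Complex.I : ℂ)) • coinMatrix s z).mulVec (v b t a z)) : C2)
          = (-Complex.I : ℂ) • (WithLp.toLp 2 ((coinMatrix s z).mulVec (v b t a z)) : C2) := by
        rw [Matrix.smul_mulVec, WithLp.toLp_smul]
      rw [e2]
      exact hder
    have hfin := ode_exp_mat' _ (fun τ => v b τ a z) a b hab hode
    simp only at hfin
    rw [hstep1 z] at hfin
    have e3 : (((b - a : ℝ) : ℂ)) • ((-Complex.I : ℂ) • coinMatrix s z)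
        = (-(Complex.I * δ)) • coinMatrix s z := by
      rw [smul_smul]
      congr 1
      rw [hba]
      push_cast
      ring
    rw [e3] at hfin
    exact hfin
  -- Step 3: shift
  intro x
  set W := Cstep δ s (Nstep δ γ g w) with hW
  have hp0 : ∀ z : C2, (WithLp.toLp 2 ((pauli 3).mulVec z) : C2) 0 = z 0 := by
    intro z
    simp [pauli, Matrix.mulVec, dotProduct, Fin.sum_univ_two]
  have hp1 : ∀ z : C2, (WithLp.toLp 2 ((pauli 3).mulVec z) : C2) 1 = -(z 1) := by
    intro z
    simp [pauli, Matrix.mulVec, dotProduct, Fin.sum_univ_two]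
  have hproj : ∀ (i : Fin 2), Continuous fun p : ℝ × ℝ => dv p.1 p.2 i := by
    intro i
    exact ((EuclideanSpace.proj (𝕜 := ℂ) i).continuous).comp h3cont
  have hxc : ∀ (i : Fin 2), ∀ t ∈ Set.Icc a b, ∀ ξ : ℝ,
      HasDerivAt (fun ξ => v b b t ξ i) (dv t ξ i) ξ := by
    intro i t ht ξ
    exact (((EuclideanSpace.proj (𝕜 := ℂ) i).restrictScalars
      ℝ).hasFDerivAt.comp_hasDerivAt ξ (h3x t ht ξ))
  -- component 0, speed -1
  have ht0 : ∀ ξ : ℝ, ∀ t ∈ Set.Icc a b,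
      HasDerivWithinAt (fun τ => v b b τ ξ 0) ((-1 : ℝ) • dv t ξ 0) (Set.Icc a b) t := by
    intro ξ t ht
    have := (((EuclideanSpace.proj (𝕜 := ℂ) (0 : Fin 2)).restrictScalars
      ℝ).hasFDerivAt.comp_hasDerivWithinAt t (h3 ξ t ht))
    have e1 : (EuclideanSpace.proj (𝕜 := ℂ) (0 : Fin 2)).restrictScalars ℝ
        (-(WithLp.toLp 2 ((pauli 3).mulVec (dv t ξ)) : C2)) = (-1 : ℝ) • dv t ξ 0 := by
      have : (EuclideanSpace.proj (𝕜 := ℂ) (0 : Fin 2)).restrictScalars ℝ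
          (-(WithLp.toLp 2 ((pauli 3).mulVec (dv t ξ)) : C2)) = -((WithLp.toLp 2 ((pauli 3).mulVec (dv t ξ)) : C2) 0) :=
        by rw [map_neg]; rfl
      rw [this, hp0]
      simp
    rw [e1] at this
    exact this
  have ht1 : ∀ ξ : ℝ, ∀ t ∈ Set.Icc a b,
      HasDerivWithinAt (fun τ => v b b τ ξ 1) ((1 : ℝ) • dv t ξ 1) (Set.Icc a b) t := by
    intro ξ t ht
    have := (((EuclideanSpace.proj (𝕜 := ℂ) (1 : Fin 2)).restrictScalars
      ℝ).hasFDerivAt.comp_hasDerivWithinAt t (h3 ξ t ht))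
    have e1 : (EuclideanSpace.proj (𝕜 := ℂ) (1 : Fin 2)).restrictScalars ℝ
        (-(WithLp.toLp 2 ((pauli 3).mulVec (dv t ξ)) : C2)) = (1 : ℝ) • dv t ξ 1 := by
      have : (EuclideanSpace.proj (𝕜 := ℂ) (1 : Fin 2)).restrictScalars ℝ
          (-(WithLp.toLp 2 ((pauli 3).mulVec (dv t ξ)) : C2)) = -((WithLp.toLp 2 ((pauli 3).mulVec (dv t ξ)) : C2) 1) :=
        by rw [map_neg]; rfl
      rw [this, hp1]
      simp
    rw [e1] at this
    exact this
  have hcomp0 := transport' (fun t ξ => v b b t ξ 0) (fun t ξ => dv t ξ 0) a b hab (-1)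
    (hproj 0) (fun t ht ξ => hxc 0 t ht ξ) ht0 x
  have hcomp1 := transport' (fun t ξ => v b b t ξ 1) (fun t ξ => dv t ξ 1) a b hab 1
    (hproj 1) (fun t ht ξ => hxc 1 t ht ξ) ht1 x
  rw [hba] at hcomp0 hcomp1
  have e0 : x + (-1) * δ = x - δ := by ring
  have e1 : x + 1 * δ = x + δ := by ring
  rw [e0] at hcomp0
  rw [e1] at hcomp1
  rw [hstep2 (x - δ)] at hcomp0
  rw [hstep2 (x + δ)] at hcomp1
  ext i
  fin_cases i
  · exact hcomp0
  · exact hcomp1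
end
end
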